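/- arXiv:1907.06125 — 5 statements merged into one kernel-verified Lean document; each statement's English description precedes it below -/
import Mathlib

section
/- Let A be a commutative ring, B a commutative A-algebra, v, u ∈ B, and m, n natural numbers. Say an element x of an A-algebra is k-integral over A if there is a monic polynomial of degree k over A annihilating x. If v is m-integral over A and u is n-integral over the subring A[v] of B, then u is (n·m)-integral over A. -/
/-!
The `A`-module `N` spanned by the `u ^ j * v ^ i` (`j < n`, `i < m`) contains `1` and is stable
under multiplication by `u`: the monic relation of `u` over `A[v]` rewrites `u ^ n` as an
`A[v]`-combination of lower powers of `u`, and `A[v]` is spanned over `A` by the `v ^ i`, `i < m`.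
Cayley–Hamilton for multiplication by `u` on `N` gives a monic polynomial annihilating `u` of
degree at most the number `n * m` of generators, and a factor `X ^ k` pads it to degree `n * m`.
-/

open Polynomial

def IsIntegralOfDegree (R : Type*) {S : Type*} [CommRing R] [Ring S] [Algebra R S]
    (x : S) (k : ℕ) : Prop :=
  ∃ P : R[X], P.Monic ∧ P.natDegree = k ∧ aeval x P = 0

namespace IsIntegralOfDegree

variable {R S : Type*} [CommRing R] [CommRing S] [Algebra R S] {x : S} {k l : ℕ}

theorem one_eq_zero (h : IsIntegralOfDegree R x 0) : (1 : S) = 0 := by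
  obtain ⟨P, hPm, hPd, hPx⟩ := h
  rwa [hPm.natDegree_eq_zero.mp hPd, map_one] at hPx

theorem of_le [Nontrivial R] (h : IsIntegralOfDegree R x k) (hkl : k ≤ l) :
    IsIntegralOfDegree R x l := by
  obtain ⟨P, hPm, hPd, hPx⟩ := h
  refine ⟨X ^ (l - k) * P, (monic_X_pow _).mul hPm, ?_, by simp [hPx]⟩
  rw [(monic_X_pow _).natDegree_mul hPm, natDegree_X_pow, hPd]
  omega

theorem adjoin_le_span_pow (h : IsIntegralOfDegree R x k) :
    Subalgebra.toSubmodule (Algebra.adjoin R {x}) ≤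
      Submodule.span R (Set.range fun i : Fin k => x ^ (i : ℕ)) := by
  nontriviality R
  obtain ⟨P, hPm, rfl, hPx⟩ := h
  intro y hy
  obtain ⟨p, rfl⟩ := Algebra.adjoin_singleton_eq_range_aeval R x ▸ hy
  exact PowerBasis.mem_span_pow'.mpr ⟨p %ₘ P,
    (degree_modByMonic_lt p hPm).trans_le degree_le_natDegree,
    (aeval_modByMonic_eq_self_of_root hPx).symm⟩

end IsIntegralOfDegree

section

variable {A B : Type*} [CommRing A] [CommRing B] [Algebra A B] {u : B}

theorem coe_aeval_restrict_mulLeft {N : Submodule A B} (hN : ∀ x ∈ N, u * x ∈ N)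
    (p : A[X]) (x : N) :
    (aeval ((LinearMap.mulLeft A u).restrict hN) p x : B) = aeval u p * x := by
  induction p using Polynomial.induction_on' with
  | add p q hp hq => simp [hp, hq, add_mul]
  | monomial k a =>
    simp [aeval_monomial, Module.End.pow_restrict (f' := LinearMap.mulLeft A u) k hN,
      LinearMap.pow_mulLeft, Algebra.smul_def, mul_assoc]

theorem isIntegralOfDegree_spanFinrank {N : Submodule A B} (hN : N.FG) (h1 : 1 ∈ N)
    (hu : ∀ x ∈ N, u * x ∈ N) : IsIntegralOfDegree A u N.spanFinrank := by
  have : Module.Finite A N := Module.Finite.iff_fg.mpr hN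
  obtain ⟨P, hPm, hPd, -, hP⟩ :=
    LinearMap.exists_monic_and_natDegree_eq_and_coeff_mem_pow_and_aeval_eq_zero A
      ((LinearMap.mulLeft A u).restrict hu) ⊤ (by simp)
  refine ⟨P, hPm, hPd.trans N.spanFinrank_top, ?_⟩
  simpa [hP] using (coe_aeval_restrict_mulLeft hu P ⟨1, h1⟩).symm

variable {C : Subalgebra A B} {ι : Type*} {c : ι → B} {n : ℕ}

theorem pow_mul_mem_span_pow_mul (hC : Subalgebra.toSubmodule C ≤ Submodule.span A (Set.range c))
    {k : ℕ} (hk : k < n) {y : B} (hy : y ∈ C) :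
    u ^ k * y ∈ Submodule.span A (Set.range fun p : Fin n × ι => u ^ (p.1 : ℕ) * c p.2) := by
  have hgen : Set.range c ⊆ (Submodule.span A (Set.range fun p : Fin n × ι =>
      u ^ (p.1 : ℕ) * c p.2)).comap (LinearMap.mulLeft A (u ^ k)) := by
    rintro _ ⟨i, rfl⟩
    exact Submodule.subset_span ⟨(⟨k, hk⟩, i), rfl⟩
  exact Submodule.span_le.mpr hgen (hC hy)

theorem mul_pow_mul_mem_span_pow_mul (hc : ∀ i, c i ∈ C)
    (hC : Subalgebra.toSubmodule C ≤ Submodule.span A (Set.range c))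
    (hu : IsIntegralOfDegree C u n) (p : Fin n × ι) :
    u * (u ^ (p.1 : ℕ) * c p.2) ∈
      Submodule.span A (Set.range fun p : Fin n × ι => u ^ (p.1 : ℕ) * c p.2) := by
  obtain ⟨⟨j, hj⟩, i⟩ := p
  rw [← mul_assoc, ← pow_succ']
  rcases (Nat.succ_le_of_lt hj).lt_or_eq with hj' | rfl
  · exact Submodule.subset_span ⟨(⟨j + 1, hj'⟩, i), rfl⟩
  obtain ⟨Q, hQm, hQd, hQu⟩ := hu
  have hun : u ^ (j + 1) = -∑ k ∈ Finset.range (j + 1), (Q.coeff k : B) * u ^ k := by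
    rw [hQm.as_sum, hQd] at hQu
    simpa [eq_neg_iff_add_eq_zero] using hQu
  rw [hun, neg_mul, Finset.sum_mul]
  refine Submodule.neg_mem _ (Submodule.sum_mem _ fun k hk => ?_)
  rw [mul_comm (Q.coeff k : B), mul_assoc]
  exact pow_mul_mem_span_pow_mul hC (Finset.mem_range.mp hk) (C.mul_mem (Q.coeff k).2 (hc i))

theorem IsIntegralOfDegree.of_subalgebra [Nontrivial A] [Fintype ι] (hc : ∀ i, c i ∈ C)
    (hC : Subalgebra.toSubmodule C ≤ Submodule.span A (Set.range c))
    (hu : IsIntegralOfDegree C u n) : IsIntegralOfDegree A u (n * Fintype.card ι) := by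
  set N := Submodule.span A (Set.range fun p : Fin n × ι => u ^ (p.1 : ℕ) * c p.2)
  have h1 : 1 ∈ N := by
    rcases n.eq_zero_or_pos with rfl | hn
    · rw [hu.one_eq_zero]
      exact N.zero_mem
    · simpa using pow_mul_mem_span_pow_mul (u := u) hC hn C.one_mem
  have hN : ∀ x ∈ N, u * x ∈ N := fun x hx =>
    (Submodule.span_le (p := N.comap (LinearMap.mulLeft A u))).mpr
      (Set.range_subset_iff.mpr (mul_pow_mul_mem_span_pow_mul hc hC hu)) hx
  refine (isIntegralOfDegree_spanFinrank (Submodule.fg_span (Set.finite_range _)) h1 hN).of_le ?_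
  calc N.spanFinrank ≤ (Set.range fun p : Fin n × ι => u ^ (p.1 : ℕ) * c p.2).ncard :=
        Submodule.spanFinrank_span_le_ncard_of_finite (Set.finite_range _)
    _ ≤ (Set.univ : Set (Fin n × ι)).ncard := by rw [← Set.image_univ]; exact Set.ncard_image_le
    _ = n * Fintype.card ι := by simp

end

theorem stmt3 {A B : Type*} [CommRing A] [CommRing B] [Algebra A B] (v u : B) (m n : ℕ)
    (hv : ∃ P : A[X], P.Monic ∧ P.natDegree = m ∧ aeval v P = 0)
    (hu : ∃ P : Polynomial (Algebra.adjoin A ({v} : Set B)), P.Monic ∧ P.natDegree = n ∧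
      Polynomial.eval₂ (Algebra.adjoin A ({v} : Set B)).val.toRingHom u P = 0) :
    ∃ P : A[X], P.Monic ∧ P.natDegree = n * m ∧ aeval u P = 0 := by
  rcases subsingleton_or_nontrivial A with hA | hA
  · obtain ⟨P, hPm, hPd, -⟩ := hv
    exact ⟨P ^ n, hPm.pow n, by rw [hPm.natDegree_pow, hPd], by simp [Subsingleton.elim (P ^ n) 0]⟩
  · rw [← Fintype.card_fin m]
    exact IsIntegralOfDegree.of_subalgebra
      (fun i : Fin m => Subalgebra.pow_mem _ (Algebra.self_mem_adjoin_singleton A v) _)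
      (IsIntegralOfDegree.adjoin_le_span_pow hv) hu
end

section
/- Let A be a commutative ring, B a commutative A-algebra, x, y ∈ B, and m, n natural numbers. If x is m-integral over A and y is n-integral over A, then x + y is (n·m)-integral over A. -/
open Polynomial Pointwise

theorem stmt4 {A B : Type*} [CommRing A] [CommRing B] [Algebra A B] (x y : B) (m n : ℕ)
    (hx : ∃ P : A[X], P.Monic ∧ P.natDegree = m ∧ aeval x P = 0)
    (hy : ∃ P : A[X], P.Monic ∧ P.natDegree = n ∧ aeval y P = 0) :
    ∃ P : A[X], P.Monic ∧ P.natDegree = n * m ∧ aeval (x + y) P = 0 := by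
  classical
  obtain ⟨Px, hPxm, hPxd, hPx0⟩ := hx
  obtain ⟨Py, hPym, hPyd, hPy0⟩ := hy
  rcases Nat.eq_zero_or_pos m with rfl | hm
  · have hPx1 : Px = 1 := hPxm.natDegree_eq_zero.mp hPxd
    subst hPx1
    have hB : (1 : B) = 0 := by simpa using hPx0
    exact ⟨1, monic_one, by simp, by simp [hB]⟩
  rcases Nat.eq_zero_or_pos n with rfl | hn
  · have hPy1 : Py = 1 := hPym.natDegree_eq_zero.mp hPyd
    subst hPy1
    have hB : (1 : B) = 0 := by simpa using hPy0
    exact ⟨1, monic_one, by simp, by simp [hB]⟩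
  have hA : Nontrivial A := by
    by_contra h
    rw [not_nontrivial_iff_subsingleton] at h
    have hPx : Px = 0 := Subsingleton.elim _ _
    rw [hPx] at hPxd
    simp at hPxd
    omega
  set z := x + y with hzdef
  set Sx : Submodule A B := Subalgebra.toSubmodule (Algebra.adjoin A {x}) with hSx
  set Sy : Submodule A B := Subalgebra.toSubmodule (Algebra.adjoin A {y}) with hSy
  set S : Submodule A B := Sx * Sy with hS
  set b : Fin m × Fin n → B := fun p => x ^ (p.1 : ℕ) * y ^ (p.2 : ℕ) with hb
  -- the span of the b's is S
  have hsetx : ((Finset.image (x ^ ·) (Finset.range m) : Finset B) : Set B) *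
      ((Finset.image (y ^ ·) (Finset.range n) : Finset B) : Set B) = Set.range b := by
    ext w
    constructor
    · rintro ⟨a, ha, c, hc, rfl⟩
      simp only [Finset.coe_image, Set.mem_image, Finset.mem_coe, Finset.mem_range] at ha hc
      obtain ⟨i, hi, rfl⟩ := ha
      obtain ⟨j, hj, rfl⟩ := hc
      exact ⟨(⟨i, hi⟩, ⟨j, hj⟩), rfl⟩
    · rintro ⟨⟨i, j⟩, rfl⟩
      exact ⟨x ^ (i : ℕ), by simp; exact ⟨i, i.2, rfl⟩, y ^ (j : ℕ), by simp; exact ⟨j, j.2, rfl⟩, rfl⟩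
  have hspan : Submodule.span A (Set.range b) = S := by
    rw [← hsetx, ← Submodule.span_mul_span, hS, hSx, hSy,
      ← Submodule.span_range_natDegree_eq_adjoin hPxm hPx0,
      ← Submodule.span_range_natDegree_eq_adjoin hPym hPy0, hPxd, hPyd]
  -- S is stable under multiplication by x, y, z
  have hxa : x ∈ Algebra.adjoin A {x} := Algebra.subset_adjoin rfl
  have hya : y ∈ Algebra.adjoin A {y} := Algebra.subset_adjoin rfl
  have hxS : ∀ s ∈ S, x * s ∈ S := by
    intro s hs
    refine Submodule.mul_induction_on hs (fun a ha c hc => ?_) (fun a c ha hc => ?_)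
    · rw [← mul_assoc]
      have ha' : a ∈ Algebra.adjoin A {x} := ha
      have hxa' : x * a ∈ Algebra.adjoin A {x} := mul_mem hxa ha'
      exact Submodule.mul_mem_mul hxa' hc
    · rw [mul_add]; exact add_mem ha hc
  have hyS : ∀ s ∈ S, y * s ∈ S := by
    intro s hs
    refine Submodule.mul_induction_on hs (fun a ha c hc => ?_) (fun a c ha hc => ?_)
    · rw [mul_left_comm]
      have hc' : c ∈ Algebra.adjoin A {y} := hc
      have hyc' : y * c ∈ Algebra.adjoin A {y} := mul_mem hya hc'
      exact Submodule.mul_mem_mul ha hyc'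
    · rw [mul_add]; exact add_mem ha hc
  have hzS : ∀ s ∈ S, (LinearMap.mul A B z) s ∈ S := by
    intro s hs
    have : z * s = x * s + y * s := by rw [hzdef, add_mul]
    rw [LinearMap.mul_apply', this]
    exact add_mem (hxS s hs) (hyS s hs)
  set f : Module.End A S := (LinearMap.mul A B z).restrict hzS with hf
  have hbmem : ∀ p, b p ∈ S := fun p => hspan ▸ Submodule.subset_span ⟨p, rfl⟩
  set b' : Fin m × Fin n → S := fun p => ⟨b p, hbmem p⟩ with hb'
  have hbtop : Submodule.span A (Set.range b') = ⊤ := by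
    apply Submodule.map_injective_of_injective S.injective_subtype
    rw [Submodule.map_span, Submodule.map_top, Submodule.range_subtype, ← Set.range_comp]
    have : (S.subtype ∘ b') = b := rfl
    rw [this, hspan]
  obtain ⟨Mr, hMr⟩ := Matrix.isRepresentation.toEnd_surjective A b' hbtop f
  refine ⟨Matrix.charpoly (Mr : Matrix (Fin m × Fin n) (Fin m × Fin n) A),
    Matrix.charpoly_monic _, by simp [mul_comm], ?_⟩
  set p : A[X] := Matrix.charpoly (Mr : Matrix (Fin m × Fin n) (Fin m × Fin n) A) with hp
  have hMr0 : aeval Mr p = 0 := by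
    have h1 : ((aeval Mr p : Matrix.isRepresentation A b') : Matrix (Fin m × Fin n)
        (Fin m × Fin n) A) = aeval (Mr : Matrix (Fin m × Fin n) (Fin m × Fin n) A) p :=
      aeval_subalgebra_coe p _ Mr
    have h2 := Matrix.aeval_self_charpoly (Mr : Matrix (Fin m × Fin n) (Fin m × Fin n) A)
    exact Subtype.ext (by rw [h1, hp, h2]; rfl)
  have hf0 : aeval f p = 0 := by
    rw [← hMr, aeval_algHom_apply, hMr0, map_zero]
  -- evaluate everything on elements of S
  have hpow : ∀ (k : ℕ) (s : S), (((f ^ k) s : S) : B) = z ^ k * (s : B) := by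
    intro k
    induction k with
    | zero => intro s; simp
    | succ k ih =>
      intro s
      rw [pow_succ']
      show ((LinearMap.mul A B) z) (((f ^ k) s : S) : B) = z ^ (k + 1) * (s : B)
      rw [LinearMap.mul_apply', ih s, ← mul_assoc, ← pow_succ']
  have heval : ∀ (q : A[X]) (s : S), (((aeval f q) s : S) : B) = aeval z q * (s : B) := by
    intro q
    induction q using Polynomial.induction_on' with
    | add r t hr ht =>
      intro s
      rw [map_add, map_add, LinearMap.add_apply, Submodule.coe_add, hr s, ht s, add_mul]
    | monomial k a =>
      intro s
      rw [aeval_monomial, aeval_monomial, Module.End.mul_apply, Module.algebraMap_end_apply,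
        SetLike.val_smul, hpow k s, Algebra.smul_def, mul_assoc]
  have h1S : (1 : B) ∈ S := by
    have := hbmem (⟨0, hm⟩, ⟨0, hn⟩)
    simpa [hb] using this
  have := heval p ⟨1, h1S⟩
  rw [hf0] at this
  simp only [LinearMap.zero_apply, ZeroMemClass.coe_zero, mul_one] at this
  exact this.symm
end

section
/- Let A be a commutative ring, B a commutative A-algebra, (I_ρ)_{ρ∈ℕ} an ideal semifiltration of A, x, y ∈ B, and m, n ∈ ℕ. If x is m-integral over (A, (I_ρ)) and y is n-integral over (A, (I_ρ)), then x + y is (n·m)-integral over (A, (I_ρ)). -/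
/-!
In the Rees algebra `S = {∑ pₖ tᵏ | pₖ ∈ Iₖ} ⊆ A[t]`, a `k`-integrality equation `∑ aᵢ uⁱ = 0`
for `u` is the same as a monic equation of degree `k` over `S` for `u t ∈ B[t]`, with coefficients
`aᵢ t^(k-i)`. Over any ring, if `x` and `y` are roots of monic polynomials `p` and `q`, then `x + y`
is a root of the characteristic polynomial of multiplication by `X ⊗ 1 + 1 ⊗ Y` on the free module
`R[X]/(p) ⊗ R[Y]/(q)`, which is monic of degree `deg p * deg q`. Applied over `S` to `x t` and
`y t`, this gives a monic equation for `(x + y) t`, and its coefficients of `t^(nm)` dehomogenise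
it to an `nm`-integrality equation for `x + y`.
-/

section

open Polynomial Finset TensorProduct

namespace Polynomial

section

variable {R : Type*} [Semiring R] {k : ℕ} {c : ℕ → R}

lemma monic_sum_range_C_mul_X_pow (hc : c k = 1) :
    (∑ i ∈ range (k + 1), C (c i) * X ^ i).Monic := by
  rw [sum_range_succ, hc, C_1, one_mul, add_comm,
    ← Fin.sum_univ_eq_sum_range fun i => C (c i) * X ^ i]
  exact monic_X_pow_add (degree_sum_fin_lt _)

lemma natDegree_sum_range_C_mul_X_pow [Nontrivial R] (hc : c k = 1) :
    (∑ i ∈ range (k + 1), C (c i) * X ^ i).natDegree = k := by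
  refine le_antisymm (natDegree_sum_le_of_forall_le _ _ fun i hi => ?_) (le_natDegree_of_ne_zero ?_)
  · exact (natDegree_C_mul_X_pow_le _ _).trans (Nat.lt_succ_iff.mp (mem_range.mp hi))
  · simp [hc]

end

theorem exists_monic_natDegree_eq_mul_eval₂_add_eq_zero {R T : Type*} [CommRing R]
    [Nontrivial R] [CommRing T] (f : R →+* T) {p q : R[X]} (hp : p.Monic) (hq : q.Monic)
    {x y : T} (hx : p.eval₂ f x = 0) (hy : q.eval₂ f y = 0) :
    ∃ r : R[X], r.Monic ∧ r.natDegree = q.natDegree * p.natDegree ∧ r.eval₂ f (x + y) = 0 := by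
  let := f.toAlgebra
  have := Module.Free.of_basis (AdjoinRoot.powerBasis' hp).basis
  have := Module.Finite.of_basis (AdjoinRoot.powerBasis' hp).basis
  have := Module.Free.of_basis (AdjoinRoot.powerBasis' hq).basis
  have := Module.Finite.of_basis (AdjoinRoot.powerBasis' hq).basis
  let u : AdjoinRoot p ⊗[R] AdjoinRoot q := AdjoinRoot.root p ⊗ₜ 1 + 1 ⊗ₜ AdjoinRoot.root q
  let φ := Algebra.TensorProduct.lift (AdjoinRoot.liftAlgHom p (Algebra.ofId R T) x hx)
    (AdjoinRoot.liftAlgHom q (Algebra.ofId R T) y hy) fun _ _ => Commute.all _ _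
  refine ⟨(Algebra.lmul R _ u).charpoly, LinearMap.charpoly_monic _, ?_, ?_⟩
  · rw [LinearMap.charpoly_natDegree, Module.finrank_tensorProduct,
      (AdjoinRoot.powerBasis' hp).finrank, (AdjoinRoot.powerBasis' hq).finrank, mul_comm]
    simp
  · have hu : aeval u (Algebra.lmul R _ u).charpoly = 0 := Algebra.lmul_injective (R := R) <| by
      rw [← aeval_algHom_apply, LinearMap.aeval_self_charpoly, map_zero]
    have hφu : φ u = x + y := by
      simp only [u, φ, map_add, Algebra.TensorProduct.lift_tmul, map_one, mul_one, one_mul]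
      exact congrArg₂ (· + ·) (AdjoinRoot.liftAlgHom_root ..) (AdjoinRoot.liftAlgHom_root ..)
    change aeval (x + y) _ = 0
    rw [← hφu, aeval_algHom_apply, hu, map_zero]

end Polynomial

variable {A : Type*} [CommRing A]

structure IsIdealSemifiltration (I : ℕ → Ideal A) : Prop where
  zero_eq_top : I 0 = ⊤
  mul_le : ∀ a b, I a * I b ≤ I (a + b)

def IsSemifiltrationIntegral {B : Type*} [CommRing B] [Algebra A B] (I : ℕ → Ideal A) (k : ℕ)
    (u : B) : Prop :=
  ∃ a : ℕ → A, (∑ j ∈ Finset.range (k + 1), algebraMap A B (a j) * u ^ j = 0) ∧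
    a k = 1 ∧ ∀ i ≤ k, a i ∈ I (k - i)

namespace IsIdealSemifiltration

variable {I : ℕ → Ideal A}

-- The variable `X` of `A[X]` plays the role of `t`.
def reesAlgebra (hI : IsIdealSemifiltration I) : Subalgebra A A[X] where
  carrier := {p | ∀ k, p.coeff k ∈ I k}
  mul_mem' {p q} hp hq k := by
    rw [coeff_mul]
    refine Ideal.sum_mem _ fun c hc => ?_
    rw [← Finset.HasAntidiagonal.mem_antidiagonal.mp hc]
    exact hI.mul_le _ _ (Ideal.mul_mem_mul (hp c.1) (hq c.2))
  add_mem' hp hq k := by rw [coeff_add]; exact add_mem (hp k) (hq k)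
  algebraMap_mem' a k := by
    rw [Polynomial.algebraMap_apply, Algebra.algebraMap_self, RingHom.id_apply, coeff_C]
    split_ifs with hk
    · rw [hk, hI.zero_eq_top]; trivial
    · exact zero_mem _

variable (hI : IsIdealSemifiltration I)

lemma C_mul_X_pow_mem_reesAlgebra {a : A} {k : ℕ} (ha : a ∈ I k) :
    C a * X ^ k ∈ hI.reesAlgebra := fun j => by
  rw [coeff_C_mul_X_pow]
  split_ifs with hj
  · rwa [hj]
  · exact zero_mem _

variable (B : Type*) [CommRing B] [Algebra A B]

noncomputable def reesMap : hI.reesAlgebra →+* B[X] :=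
  (mapRingHom (algebraMap A B)).comp hI.reesAlgebra.val.toRingHom

@[simp]
lemma reesMap_apply (p : hI.reesAlgebra) : hI.reesMap B p = (p : A[X]).map (algebraMap A B) := rfl

variable {B}

lemma exists_monic_eval₂_C_mul_X [Nontrivial A] {k : ℕ} {u : B}
    (hu : IsSemifiltrationIntegral I k u) :
    ∃ p : hI.reesAlgebra[X], p.Monic ∧ p.natDegree = k ∧ p.eval₂ (hI.reesMap B) (C u * X) = 0 := by
  obtain ⟨a, hsum, hak, ha⟩ := hu
  have ha' (i : ℕ) : a i ∈ I (k - i) := by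
    rcases le_or_gt i k with h | h
    · exact ha i h
    · rw [Nat.sub_eq_zero_of_le h.le, hI.zero_eq_top]; trivial
  let c (i : ℕ) : hI.reesAlgebra := ⟨C (a i) * X ^ (k - i), hI.C_mul_X_pow_mem_reesAlgebra (ha' i)⟩
  have hck : c k = 1 := Subtype.ext <| by simp [c, hak]
  refine ⟨_, monic_sum_range_C_mul_X_pow hck, natDegree_sum_range_C_mul_X_pow hck, ?_⟩
  have hterm (i : ℕ) (hi : i ∈ range (k + 1)) :
      hI.reesMap B (c i) * (C u * X) ^ i = C (algebraMap A B (a i) * u ^ i) * X ^ k := by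
    simp only [reesMap_apply, c, Polynomial.map_mul, map_C, Polynomial.map_pow, map_X, C_mul,
      C_pow, mul_pow]
    rw [← Nat.sub_add_cancel (Nat.lt_succ_iff.mp (mem_range.mp hi)), pow_add, Nat.add_sub_cancel]
    ring
  simp only [eval₂_finsetSum, eval₂_mul, eval₂_C, eval₂_X_pow]
  rw [sum_congr rfl hterm, ← sum_mul, ← map_sum, hsum, C_0, zero_mul]

lemma isSemifiltrationIntegral_of_eval₂_C_mul_X {k : ℕ} {u : B} {p : hI.reesAlgebra[X]}
    (hp : p.Monic) (hpk : p.natDegree = k) (h : p.eval₂ (hI.reesMap B) (C u * X) = 0) :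
    IsSemifiltrationIntegral I k u := by
  refine ⟨fun i => (p.coeff i : A[X]).coeff (k - i), ?_, ?_, fun i _ => (p.coeff i).2 _⟩
  · have hk := congrArg (coeff · k) h
    simp only [eval₂_eq_sum_range, hpk, finsetSum_coeff, coeff_zero] at hk
    rw [← hk]
    refine sum_congr rfl fun i hi => ?_
    rw [reesMap_apply, mul_pow, ← C_pow, ← mul_assoc, coeff_mul_X_pow',
      if_pos (Nat.lt_succ_iff.mp (mem_range.mp hi)), coeff_mul_C, coeff_map]
  · subst hpk
    simp [hp.coeff_natDegree]

end IsIdealSemifiltration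

end

theorem stmt15 {A B : Type*} [CommRing A] [CommRing B] [Algebra A B] (I : ℕ → Ideal A)
    (hI0 : I 0 = ⊤) (hImul : ∀ a b : ℕ, I a * I b ≤ I (a + b)) (x y : B) (m n : ℕ)
    (hx : ∃ a : ℕ → A, (∑ k ∈ Finset.range (m + 1), algebraMap A B (a k) * x ^ k = 0) ∧
      a m = 1 ∧ ∀ i ≤ m, a i ∈ I (m - i))
    (hy : ∃ a : ℕ → A, (∑ k ∈ Finset.range (n + 1), algebraMap A B (a k) * y ^ k = 0) ∧
      a n = 1 ∧ ∀ i ≤ n, a i ∈ I (n - i)) :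
    ∃ a : ℕ → A, (∑ k ∈ Finset.range (n * m + 1), algebraMap A B (a k) * (x + y) ^ k = 0) ∧
      a (n * m) = 1 ∧ ∀ i ≤ n * m, a i ∈ I (n * m - i) := by
  have hI : IsIdealSemifiltration I := ⟨hI0, hImul⟩
  cases subsingleton_or_nontrivial A
  · exact ⟨fun _ => 0, by simp, Subsingleton.elim _ _, fun _ _ => zero_mem _⟩
  obtain ⟨p, hp, hpm, hpx⟩ := hI.exists_monic_eval₂_C_mul_X (k := m) hx
  obtain ⟨q, hq, hqn, hqy⟩ := hI.exists_monic_eval₂_C_mul_X (k := n) hy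
  obtain ⟨r, hr, hrd, hrxy⟩ :=
    Polynomial.exists_monic_natDegree_eq_mul_eval₂_add_eq_zero _ hp hq hpx hqy
  rw [hpm, hqn] at hrd
  rw [← add_mul, ← Polynomial.C_add] at hrxy
  exact hI.isSemifiltrationIntegral_of_eval₂_C_mul_X hr hrd hrxy
end

section
/- Let A be a commutative ring, B a commutative A-algebra, and (I_ρ)_{ρ∈ℕ}, (J_ρ)_{ρ∈ℕ} two ideal semifiltrations of A. Let x, y ∈ B and m, n ∈ ℕ. If x is m-integral over (A, (I_ρ)) and y is n-integral over (A, (J_ρ)), then x·y is (n·m)-integral over (A, (I_ρ J_ρ)), where (I_ρ J_ρ)_{ρ∈ℕ} is the (product) ideal semifiltration with ρ-th term I_ρ·J_ρ. -/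
/-!
Let `C_a` and `C_b` be the companion matrices of the given equations of `x` and `y`, so that
`x • (x ^ i)ᵢ = C_a (x ^ i)ᵢ` and `y • (y ^ j)ⱼ = C_b (y ^ j)ⱼ`. Then `x * y` is an eigenvalue of
`M = C_a ⊗ₖ C_b` with eigenvector `(x ^ i * y ^ j)ᵢⱼ`, one of whose entries is `1`, so by the
determinant trick the characteristic polynomial of `M`, monic of degree `n * m`, kills `x * y`.
Its coefficient of `X ^ k` is a signed sum of products `∏ i ∈ u, M (σ i) i` over sets `u` of size
`n * m - k` containing the support of `σ`. Giving the entry `(r, c)` of a companion matrix the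
degree `r + 1 - c`, these degrees add up to `#u` along such a product, so the `C_a`-factors lie in
`I #u` and the `C_b`-factors in `J #u`.
-/

open Polynomial Finset Matrix
open scoped Kronecker

section

variable {A B : Type*} [CommRing A] [CommRing B] [Algebra A B]

theorem Ideal.gradedMonoid_of_mul_le {K : ℕ → Ideal A} (h0 : K 0 = ⊤)
    (hmul : ∀ a b, K a * K b ≤ K (a + b)) : SetLike.GradedMonoid K where
  one_mem := h0 ▸ Submodule.mem_top
  mul_mem _ _ _ _ hi hj := hmul _ _ (Ideal.mul_mem_mul hi hj)

theorem Matrix.coeff_prod_charmatrix_mem {ι : Type*} [Fintype ι] [DecidableEq ι]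
    (K : ℕ → Ideal A) (M : Matrix ι ι A) (σ : Equiv.Perm ι)
    (hM : ∀ u : Finset ι, {i | σ i ≠ i} ⊆ ↑u → ∏ i ∈ u, M (σ i) i ∈ K #u) (k : ℕ) :
    (∏ i, M.charmatrix (σ i) i).coeff k ∈ K (Fintype.card ι - k) := by
  have hentry : ∀ i, M.charmatrix (σ i) i = (if σ i = i then X else 0) + -C (M (σ i) i) := by
    intro i
    rw [charmatrix_apply, diagonal_apply, sub_eq_add_neg]
  rw [prod_congr rfl fun i _ => hentry i, prod_add, finsetSum_coeff]
  refine sum_mem fun t _ => ?_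
  by_cases hfix : ∀ i ∈ t, σ i = i
  · have hsupp : {i | σ i ≠ i} ⊆ ↑tᶜ := fun i hi => by
      simpa using fun hit => hi (hfix i hit)
    have hterm : (∏ i ∈ t, if σ i = i then (X : A[X]) else 0) *
        ∏ i ∈ univ \ t, -C (M (σ i) i) = C ((-1) ^ #tᶜ * ∏ i ∈ tᶜ, M (σ i) i) * X ^ #t := by
      rw [prod_congr rfl fun i hi => if_pos (hfix i hi), prod_const, ← compl_eq_univ_sdiff,
        prod_neg, ← map_prod]
      simp only [map_mul, map_pow, map_neg, map_one]
      ring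
    rw [hterm, coeff_C_mul_X_pow]
    split_ifs with hk
    · rw [hk, ← card_compl]
      exact Ideal.mul_mem_left _ _ (hM _ hsupp)
    · exact zero_mem _
  · push Not at hfix
    obtain ⟨i, hit, hσi⟩ := hfix
    rw [prod_eq_zero hit (if_neg hσi), zero_mul, coeff_zero]
    exact zero_mem _

theorem Matrix.charpoly_coeff_mem_of_prod_mem {ι : Type*} [Fintype ι] [DecidableEq ι]
    (K : ℕ → Ideal A) (M : Matrix ι ι A)
    (hM : ∀ (σ : Equiv.Perm ι) (u : Finset ι), {i | σ i ≠ i} ⊆ ↑u → ∏ i ∈ u, M (σ i) i ∈ K #u)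
    (k : ℕ) : M.charpoly.coeff k ∈ K (Fintype.card ι - k) := by
  rw [Matrix.charpoly, Matrix.det_apply, finsetSum_coeff]
  refine sum_mem fun σ _ => ?_
  rw [coeff_smul, Units.smul_def]
  exact zsmul_mem (M.coeff_prod_charmatrix_mem K σ (hM σ) k) _

def Matrix.RespectsFiltration {ι : Type*} (K : ℕ → Ideal A) (w : ι → ℕ)
    (M : Matrix ι ι A) : Prop :=
  ∀ r c, M r c ≠ 0 → w c ≤ w r + 1 ∧ M r c ∈ K (w r + 1 - w c)

namespace Matrix.RespectsFiltration

variable {ι : Type*} {K : ℕ → Ideal A} {w : ι → ℕ} {M : Matrix ι ι A}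

theorem submatrix {κ : Type*} (hM : M.RespectsFiltration K w) (f : κ → ι) :
    (M.submatrix f f).RespectsFiltration K (w ∘ f) :=
  fun r c => hM (f r) (f c)

theorem prod_perm_mem [SetLike.GradedMonoid K] (hM : M.RespectsFiltration K w)
    (σ : Equiv.Perm ι) (u : Finset ι) (hu : {i | σ i ≠ i} ⊆ ↑u) :
    ∏ i ∈ u, M (σ i) i ∈ K #u := by
  by_cases hzero : ∃ i ∈ u, M (σ i) i = 0
  · obtain ⟨i, hi, h0⟩ := hzero
    rw [prod_eq_zero (f := fun i => M (σ i) i) hi h0]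
    exact zero_mem _
  push Not at hzero
  have hdeg : ∑ i ∈ u, (w (σ i) + 1 - w i) = #u := by
    have h := sum_congr rfl fun i hi => Nat.sub_add_cancel (hM _ _ (hzero i hi)).1
    rw [sum_add_distrib, sum_add_distrib, σ.sum_comp u w hu, sum_const, smul_eq_mul,
      mul_one] at h
    omega
  simpa only [hdeg] using
    SetLike.prod_mem_graded K (fun i => w (σ i) + 1 - w i) _ fun i hi => (hM _ _ (hzero i hi)).2

end Matrix.RespectsFiltration

theorem Matrix.charpoly_kronecker_coeff_mem {κ ν : Type*} [Fintype κ] [DecidableEq κ]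
    [Fintype ν] [DecidableEq ν] {I J : ℕ → Ideal A} [SetLike.GradedMonoid I]
    [SetLike.GradedMonoid J] {v : κ → ℕ} {w : ν → ℕ} {X : Matrix κ κ A} {Y : Matrix ν ν A}
    (hX : X.RespectsFiltration I v) (hY : Y.RespectsFiltration J w) (k : ℕ) :
    (X ⊗ₖ Y).charpoly.coeff k ∈ I (Fintype.card (κ × ν) - k) * J (Fintype.card (κ × ν) - k) :=
  charpoly_coeff_mem_of_prod_mem (fun ρ => I ρ * J ρ) _ (fun σ u hu => by
    rw [show ∏ i ∈ u, (X ⊗ₖ Y) (σ i) i = (∏ i ∈ u, X.submatrix Prod.fst Prod.fst (σ i) i) *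
        ∏ i ∈ u, Y.submatrix Prod.snd Prod.snd (σ i) i from prod_mul_distrib]
    exact Ideal.mul_mem_mul ((hX.submatrix _).prod_perm_mem σ u hu)
      ((hY.submatrix _).prod_perm_mem σ u hu)) k

theorem Matrix.aeval_charpoly_smul_eq_zero {ι : Type*} [Fintype ι] [DecidableEq ι]
    (M : Matrix ι ι A) {c : B} {v : ι → B} (hv : M.map (algebraMap A B) *ᵥ v = c • v) :
    aeval c M.charpoly • v = 0 := by
  set N := c • (1 : Matrix ι ι B) - M.map (algebraMap A B)
  have hN : N *ᵥ v = 0 := by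
    rw [sub_mulVec, hv, smul_mulVec, one_mulVec, sub_self]
  have hdet : aeval c M.charpoly = N.det := by
    rw [← eval_map_algebraMap, ← charpoly_map, eval_charpoly, scalar_apply,
      ← smul_one_eq_diagonal]
  calc aeval c M.charpoly • v = (N.adjugate * N) *ᵥ v := by
        rw [hdet, adjugate_mul, smul_mulVec, one_mulVec]
    _ = 0 := by rw [← mulVec_mulVec, hN, mulVec_zero]

theorem Matrix.kronecker_mulVec_mul {R : Type*} [CommSemiring R] {κ ν : Type*} [Fintype κ]
    [Fintype ν] {X : Matrix κ κ R} {Y : Matrix ν ν R} {u : κ → R} {v : ν → R} {c d : R}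
    (hu : X *ᵥ u = c • u) (hv : Y *ᵥ v = d • v) :
    (X ⊗ₖ Y) *ᵥ (fun p => u p.1 * v p.2) = (c * d) • fun p => u p.1 * v p.2 := by
  ext ⟨i, j⟩
  calc ((X ⊗ₖ Y) *ᵥ fun p => u p.1 * v p.2) (i, j) = (X *ᵥ u) i * (Y *ᵥ v) j := by
        simp only [mulVec, dotProduct, kronecker_apply, Fintype.sum_prod_type, sum_mul_sum]
        exact sum_congr rfl fun _ _ => sum_congr rfl fun _ _ => by ring
    _ = _ := by rw [hu, hv]; simp only [Pi.smul_apply, smul_eq_mul]; ring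

/-- Row `r` writes `x * x ^ r` in the basis `1, x, …, x ^ (m - 1)`; the last row uses
`x ^ m = -∑ k < m, a k * x ^ k`. -/
def Matrix.companion (a : ℕ → A) (m : ℕ) : Matrix (Fin m) (Fin m) A :=
  Matrix.of fun r c => if (r : ℕ) + 1 = m then -a c else if (c : ℕ) = r + 1 then 1 else 0

theorem Matrix.companion_respectsFiltration {K : ℕ → Ideal A} [SetLike.GradedMonoid K]
    {a : ℕ → A} {m : ℕ} (ha : ∀ i ≤ m, a i ∈ K (m - i)) :
    (companion a m).RespectsFiltration K fun i : Fin m => (i : ℕ) := by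
  intro r c hrc
  simp only [companion, of_apply] at hrc ⊢
  split_ifs at hrc ⊢ with hlast hnext
  · rw [hlast]
    exact ⟨by omega, neg_mem (ha c c.is_lt.le)⟩
  · rw [hnext, Nat.sub_self]
    exact ⟨le_rfl, SetLike.one_mem_graded K⟩
  · exact absurd rfl hrc

theorem Matrix.companion_map_mulVec {a : ℕ → A} {m : ℕ} {x : B}
    (hx : ∑ k ∈ range (m + 1), algebraMap A B (a k) * x ^ k = 0) (ha : a m = 1) :
    (companion a m).map (algebraMap A B) *ᵥ (fun i : Fin m => x ^ (i : ℕ)) =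
      x • fun i : Fin m => x ^ (i : ℕ) := by
  ext r
  simp only [mulVec, dotProduct, map_apply, companion, of_apply, Pi.smul_apply, smul_eq_mul,
    ← pow_succ']
  split_ifs with hlast
  · rw [sum_range_succ, ha, map_one, one_mul, add_eq_zero_iff_eq_neg'] at hx
    simp only [map_neg, neg_mul, sum_neg_distrib, hlast, hx,
      Fin.sum_univ_eq_sum_range (fun k => algebraMap A B (a k) * x ^ k)]
  · rw [Fintype.sum_eq_single ⟨r + 1, by omega⟩ fun c hc => ?_]
    · simp
    · rw [if_neg fun h => hc (Fin.ext h), map_zero, zero_mul]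

theorem Matrix.aeval_mul_charpoly_kronecker_companion_eq_zero {a b : ℕ → A} {m n : ℕ} {x y : B}
    (hx : ∑ k ∈ range (m + 1), algebraMap A B (a k) * x ^ k = 0) (ha : a m = 1)
    (hy : ∑ k ∈ range (n + 1), algebraMap A B (b k) * y ^ k = 0) (hb : b n = 1) :
    aeval (x * y) (companion a m ⊗ₖ companion b n).charpoly = 0 := by
  nontriviality B
  -- for `m = 0` the equation of `x` reads `1 = 0`; otherwise `(0, 0)` indexes the entry `1`
  have hm : 0 < m := Nat.pos_of_ne_zero fun h => by subst h; simp [ha] at hx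
  have hn : 0 < n := Nat.pos_of_ne_zero fun h => by subst h; simp [hb] at hy
  have hmap : (companion a m ⊗ₖ companion b n).map (algebraMap A B) =
      (companion a m).map (algebraMap A B) ⊗ₖ (companion b n).map (algebraMap A B) := by
    ext; simp
  have h := aeval_charpoly_smul_eq_zero _ (hmap ▸ kronecker_mulVec_mul
    (companion_map_mulVec hx ha) (companion_map_mulVec hy hb))
  simpa using congrFun h (⟨0, hm⟩, ⟨0, hn⟩)

theorem exists_coeffs_of_aeval_eq_zero (K : ℕ → Ideal A) {p : A[X]} {N : ℕ} {u : B}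
    (hdeg : p.natDegree ≤ N) (hlead : p.coeff N = 1) (hroot : aeval u p = 0)
    (hcoeff : ∀ k, p.coeff k ∈ K (N - k)) :
    ∃ a : ℕ → A, (∑ k ∈ range (N + 1), algebraMap A B (a k) * u ^ k = 0) ∧
      a N = 1 ∧ ∀ i ≤ N, a i ∈ K (N - i) :=
  ⟨p.coeff, by simpa only [aeval_eq_sum_range' (Nat.lt_succ_of_le hdeg), Algebra.smul_def]
    using hroot, hlead, fun i _ => hcoeff i⟩

end

theorem stmt17 {A B : Type*} [CommRing A] [CommRing B] [Algebra A B] (I J : ℕ → Ideal A)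
    (hI0 : I 0 = ⊤) (hImul : ∀ a b : ℕ, I a * I b ≤ I (a + b))
    (hJ0 : J 0 = ⊤) (hJmul : ∀ a b : ℕ, J a * J b ≤ J (a + b)) (x y : B) (m n : ℕ)
    (hx : ∃ a : ℕ → A, (∑ k ∈ Finset.range (m + 1), algebraMap A B (a k) * x ^ k = 0) ∧
      a m = 1 ∧ ∀ i ≤ m, a i ∈ I (m - i))
    (hy : ∃ a : ℕ → A, (∑ k ∈ Finset.range (n + 1), algebraMap A B (a k) * y ^ k = 0) ∧
      a n = 1 ∧ ∀ i ≤ n, a i ∈ J (n - i)) :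
    ∃ a : ℕ → A, (∑ k ∈ Finset.range (n * m + 1), algebraMap A B (a k) * (x * y) ^ k = 0) ∧
      a (n * m) = 1 ∧ ∀ i ≤ n * m, a i ∈ I (n * m - i) * J (n * m - i) := by
  obtain ⟨a, hxa, ham, haI⟩ := hx
  obtain ⟨b, hyb, hbn, hbJ⟩ := hy
  have := Ideal.gradedMonoid_of_mul_le hI0 hImul
  have := Ideal.gradedMonoid_of_mul_le hJ0 hJmul
  set M := companion a m ⊗ₖ companion b n
  have hcard : Fintype.card (Fin m × Fin n) = n * m := by simp [mul_comm]
  refine exists_coeffs_of_aeval_eq_zero (fun ρ => I ρ * J ρ) (p := M.charpoly) ?_ ?_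
    (aeval_mul_charpoly_kronecker_companion_eq_zero hxa ham hyb hbn) fun k => hcard ▸
      charpoly_kronecker_coeff_mem (companion_respectsFiltration haI)
        (companion_respectsFiltration hbJ) k
  · nontriviality A
    rw [charpoly_natDegree_eq_dim, hcard]
  · nontriviality A
    simpa [hcard] using (charpoly_monic M).coeff_natDegree
end

section
/- Let A be a commutative ring, B a commutative A-algebra, and x, y ∈ B. Let m, n ∈ ℕ and u ∈ B. If u is n-integral over the subring A[x] of B and u is m-integral over the subring A[y] of B, then there exists some λ ∈ ℕ such that u is λ-integral over the subring A[xy] of B; in particular, u is integral over A[xy]. -/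
open Polynomial

section Aux

variable {R S : Type*} [CommRing R] [CommRing S] [Algebra R S]

/-- Determinant trick: if `u` stabilizes a f.g. submodule containing `1`, then `u` is
integral. -/
lemma isIntegral_of_one_mem_fg (N : Submodule R S) (hfg : N.FG) (h1 : (1 : S) ∈ N)
    (u : S) (hu : ∀ v ∈ N, u * v ∈ N) : IsIntegral R u := by
  haveI : Module.Finite R N := ⟨(Submodule.fg_top _).mpr hfg⟩
  let f : Module.End R N := (LinearMap.mul R S u).restrict (p := N) (q := N)
    (fun v hv => hu v hv)
  obtain ⟨P, hmonic, hP⟩ := LinearMap.exists_monic_and_aeval_eq_zero R f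
  have hfapp : ∀ v : N, ((f v : N) : S) = u * (v : S) := fun v => rfl
  have hpow : ∀ (k : ℕ) (v : N), (((f ^ k) v : N) : S) = u ^ k * (v : S) := by
    intro k
    induction k with
    | zero => intro v; simp
    | succ k ih =>
      intro v
      rw [pow_succ', Module.End.mul_apply, hfapp, ih v, pow_succ']
      ring
  have key : ∀ (Q : R[X]) (v : N), (((Polynomial.aeval f Q) v : N) : S)
      = Polynomial.aeval u Q * (v : S) := by
    intro Q
    induction Q using Polynomial.induction_on' with
    | add p q hp hq =>
      intro v
      rw [map_add, map_add, LinearMap.add_apply, Submodule.coe_add, hp v, hq v, add_mul]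
    | monomial k a =>
      intro v
      rw [aeval_monomial, aeval_monomial, Module.End.mul_apply]
      rw [show ((algebraMap R (Module.End R N)) a) ((f ^ k) v) = a • ((f ^ k) v) from rfl]
      rw [Submodule.coe_smul, hpow k v, Algebra.smul_def, mul_assoc]
  have := key P ⟨1, h1⟩
  rw [hP] at this
  simp only [LinearMap.zero_apply, ZeroMemClass.coe_zero, mul_one] at this
  exact ⟨P, hmonic, by rw [← aeval_def, ← this]⟩

end Aux

section Main

variable {A B : Type*} [CommRing A] [CommRing B] [Algebra A B]

/-- From a monic relation over `A[x]`, extract a representation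
`u ^ n = ∑ aeval x (p i) * u ^ i` with `n ≥ 1`. -/
lemma rep_of_monic (x u : B)
    (hx : ∃ P : Polynomial (Algebra.adjoin A ({x} : Set B)), P.Monic ∧
      Polynomial.eval₂ (Algebra.adjoin A ({x} : Set B)).val.toRingHom u P = 0) :
    ∃ n, 0 < n ∧ ∃ p : ℕ → A[X],
      u ^ n = ∑ i ∈ Finset.range n, Polynomial.aeval x (p i) * u ^ i := by
  classical
  rcases subsingleton_or_nontrivial B with hB | hB
  · exact ⟨1, Nat.one_pos, fun _ => 0, Subsingleton.elim _ _⟩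
  haveI : Nontrivial ↥(Algebra.adjoin A ({x} : Set B)) :=
    ⟨⟨0, 1, fun h => zero_ne_one (congrArg Subtype.val h)⟩⟩
  obtain ⟨P₀, hm₀, he₀⟩ := hx
  set f := (Algebra.adjoin A ({x} : Set B)).val.toRingHom with hf
  set P : Polynomial (Algebra.adjoin A ({x} : Set B)) := P₀ * X with hPdef
  have hm : P.Monic := hm₀.mul monic_X
  have he : eval₂ f u P = 0 := by rw [hPdef, eval₂_mul, he₀, zero_mul]
  set n := P.natDegree with hn
  have hnpos : 0 < n := by
    have : P.natDegree = P₀.natDegree + 1 := natDegree_mul_X hm₀.ne_zero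
    omega
  have hsum : eval₂ f u P = ∑ i ∈ Finset.range (n + 1), f (P.coeff i) * u ^ i :=
    eval₂_eq_sum_range f u
  rw [Finset.sum_range_succ, he] at hsum
  have hlead : f (P.coeff n) = 1 := by
    rw [show P.coeff n = 1 from hm, map_one]
  rw [hlead, one_mul] at hsum
  have hrel : u ^ n = ∑ i ∈ Finset.range n, (-(f (P.coeff i))) * u ^ i := by
    have : u ^ n = -∑ i ∈ Finset.range n, f (P.coeff i) * u ^ i := by linear_combination -hsum
    rw [this, ← Finset.sum_neg_distrib]
    exact Finset.sum_congr rfl fun i _ => by ring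
  have hmem : ∀ i : ℕ, ∃ q : A[X], Polynomial.aeval x q = -(f (P.coeff i)) := by
    intro i
    have h2 : (-(f (P.coeff i)) : B) ∈ Algebra.adjoin A ({x} : Set B) :=
      neg_mem (P.coeff i).2
    exact (Algebra.adjoin_singleton_eq_range_aeval A x).le h2
  choose p hp using hmem
  exact ⟨n, hnpos, p, by rw [hrel]; exact Finset.sum_congr rfl fun i _ => by rw [hp i]⟩

lemma isIntegral_adjoin_mul (x y u : B)
    (hx : ∃ P : Polynomial (Algebra.adjoin A ({x} : Set B)), P.Monic ∧
      Polynomial.eval₂ (Algebra.adjoin A ({x} : Set B)).val.toRingHom u P = 0)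
    (hy : ∃ P : Polynomial (Algebra.adjoin A ({y} : Set B)), P.Monic ∧
      Polynomial.eval₂ (Algebra.adjoin A ({y} : Set B)).val.toRingHom u P = 0) :
    IsIntegral (Algebra.adjoin A ({x * y} : Set B)) u := by
  classical
  obtain ⟨n, hn, p, hxrel⟩ := rep_of_monic x u hx
  obtain ⟨m, hm, q, hyrel⟩ := rep_of_monic y u hy
  set C := Algebra.adjoin A ({x * y} : Set B) with hC
  set d := ((Finset.range n).sup fun i => (p i).natDegree)
    ⊔ ((Finset.range m).sup fun j => (q j).natDegree) with hd
  set N := n + m - 1 with hN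
  set F : Finset B :=
    (Finset.Iic d ×ˢ Finset.range N).image (fun t => x ^ t.1 * u ^ t.2)
      ∪ (Finset.Iic d ×ˢ Finset.range N).image (fun t => y ^ t.1 * u ^ t.2) with hF
  set M : Submodule C B := Submodule.span C (F : Set B) with hM
  have hgenx : ∀ a c, a ≤ d → c < N → x ^ a * u ^ c ∈ M := by
    intro a c ha hc
    apply Submodule.subset_span
    apply Finset.mem_coe.mpr
    apply Finset.mem_union_left
    exact Finset.mem_image.mpr ⟨(a, c), Finset.mem_product.mpr
      ⟨Finset.mem_Iic.mpr ha, Finset.mem_range.mpr hc⟩, rfl⟩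
  have hgeny : ∀ a c, a ≤ d → c < N → y ^ a * u ^ c ∈ M := by
    intro a c ha hc
    apply Submodule.subset_span
    apply Finset.mem_coe.mpr
    apply Finset.mem_union_right
    exact Finset.mem_image.mpr ⟨(a, c), Finset.mem_product.mpr
      ⟨Finset.mem_Iic.mpr ha, Finset.mem_range.mpr hc⟩, rfl⟩
  have hCpow : ∀ t : ℕ, (x * y) ^ t ∈ C :=
    fun t => pow_mem (Algebra.subset_adjoin (Set.mem_singleton _)) t
  have hsmul : ∀ (w : B) (hw : w ∈ C) (v : B), v ∈ M → w * v ∈ M := by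
    intro w hw v hv
    have := M.smul_mem (⟨w, hw⟩ : C) hv
    rwa [show (⟨w, hw⟩ : C) • v = w * v from Algebra.smul_def _ _] at this
  have hmix : ∀ a l c, a ≤ d → l ≤ d → c < N → x ^ a * y ^ l * u ^ c ∈ M := by
    intro a l c ha hl hc
    rcases le_total l a with h | h
    · obtain ⟨e, rfl⟩ : ∃ e, a = l + e := ⟨a - l, by omega⟩
      have hxy : x ^ (l + e) * y ^ l = (x * y) ^ l * x ^ e := by
        rw [pow_add, mul_pow]; ring
      rw [hxy, mul_assoc]
      exact hsmul _ (hCpow l) _ (hgenx e c (by omega) hc)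
    · obtain ⟨e, rfl⟩ : ∃ e, l = a + e := ⟨l - a, by omega⟩
      have hxy : x ^ a * y ^ (a + e) = (x * y) ^ a * y ^ e := by
        rw [pow_add, mul_pow]; ring
      rw [hxy, mul_assoc]
      exact hsmul _ (hCpow a) _ (hgeny e c (by omega) hc)
  have hAsmul : ∀ (r : A) (v : B), v ∈ M → r • v ∈ M := by
    intro r v hv
    have := M.smul_mem (algebraMap A C r) hv
    rwa [algebraMap_smul] at this
  have hmixq : ∀ a c (Q : A[X]), a ≤ d → Q.natDegree ≤ d → c < N →
      x ^ a * (Polynomial.aeval y Q * u ^ c) ∈ M := by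
    intro a c Q ha hQ hc
    rw [Polynomial.aeval_eq_sum_range' (lt_of_le_of_lt hQ (Nat.lt_succ_self d)) y,
      Finset.sum_mul, Finset.mul_sum]
    refine Submodule.sum_mem M fun l hl => ?_
    have hterm : x ^ a * (Q.coeff l • y ^ l * u ^ c)
        = Q.coeff l • (x ^ a * y ^ l * u ^ c) := by
      rw [smul_mul_assoc, mul_smul_comm, mul_assoc]
    rw [hterm]
    exact hAsmul _ _ (hmix a l c ha (Nat.lt_succ_iff.mp (Finset.mem_range.mp hl)) hc)
  have hmixp : ∀ a c (Q : A[X]), a ≤ d → Q.natDegree ≤ d → c < N →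
      y ^ a * (Polynomial.aeval x Q * u ^ c) ∈ M := by
    intro a c Q ha hQ hc
    rw [Polynomial.aeval_eq_sum_range' (lt_of_le_of_lt hQ (Nat.lt_succ_self d)) x,
      Finset.sum_mul, Finset.mul_sum]
    refine Submodule.sum_mem M fun l hl => ?_
    have hterm : y ^ a * (Q.coeff l • x ^ l * u ^ c)
        = Q.coeff l • (x ^ l * y ^ a * u ^ c) := by
      rw [smul_mul_assoc, mul_smul_comm]; ring_nf
    rw [hterm]
    exact hAsmul _ _ (hmix l a c (Nat.lt_succ_iff.mp (Finset.mem_range.mp hl)) ha hc)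
  have hpd : ∀ i < n, (p i).natDegree ≤ d := by
    intro i hi
    calc (p i).natDegree ≤ (Finset.range n).sup fun i => (p i).natDegree :=
          Finset.le_sup (f := fun i => (p i).natDegree) (Finset.mem_range.mpr hi)
      _ ≤ d := le_sup_left
  have hqd : ∀ j < m, (q j).natDegree ≤ d := by
    intro j hj
    calc (q j).natDegree ≤ (Finset.range m).sup fun j => (q j).natDegree :=
          Finset.le_sup (f := fun j => (q j).natDegree) (Finset.mem_range.mpr hj)
      _ ≤ d := le_sup_right
  have hstab : ∀ v ∈ M, u * v ∈ M := by
    intro v hv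
    induction hv using Submodule.span_induction with
    | mem w hw =>
      rw [Finset.mem_coe, hF, Finset.mem_union] at hw
      rcases hw with hw | hw
      · obtain ⟨⟨a, c⟩, hac, rfl⟩ := Finset.mem_image.mp hw
        obtain ⟨ha, hc⟩ := Finset.mem_product.mp hac
        rw [Finset.mem_Iic] at ha
        rw [Finset.mem_range] at hc
        have heq : u * (x ^ a * u ^ c) = x ^ a * u ^ (c + 1) := by
          rw [pow_succ]; ring
        rw [heq]
        by_cases hcN : c + 1 < N
        · exact hgenx a (c + 1) ha hcN
        · have hc1 : c + 1 = N := by omega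
          have hu1 : u ^ (c + 1) = u ^ (n - 1) * u ^ m := by
            rw [← pow_add]; congr 1; omega
          rw [hu1, hyrel, Finset.mul_sum, Finset.mul_sum]
          refine Submodule.sum_mem M fun j hj => ?_
          have hterm : x ^ a * (u ^ (n - 1) * (Polynomial.aeval y (q j) * u ^ j))
              = x ^ a * (Polynomial.aeval y (q j) * u ^ (n - 1 + j)) := by
            rw [pow_add]; ring
          rw [hterm]
          have hjm := Finset.mem_range.mp hj
          exact hmixq a (n - 1 + j) (q j) ha (hqd j hjm) (by omega)
      · obtain ⟨⟨a, c⟩, hac, rfl⟩ := Finset.mem_image.mp hw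
        obtain ⟨ha, hc⟩ := Finset.mem_product.mp hac
        rw [Finset.mem_Iic] at ha
        rw [Finset.mem_range] at hc
        have heq : u * (y ^ a * u ^ c) = y ^ a * u ^ (c + 1) := by
          rw [pow_succ]; ring
        rw [heq]
        by_cases hcN : c + 1 < N
        · exact hgeny a (c + 1) ha hcN
        · have hc1 : c + 1 = N := by omega
          have hu1 : u ^ (c + 1) = u ^ (m - 1) * u ^ n := by
            rw [← pow_add]; congr 1; omega
          rw [hu1, hxrel, Finset.mul_sum, Finset.mul_sum]
          refine Submodule.sum_mem M fun i hi => ?_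
          have hterm : y ^ a * (u ^ (m - 1) * (Polynomial.aeval x (p i) * u ^ i))
              = y ^ a * (Polynomial.aeval x (p i) * u ^ (m - 1 + i)) := by
            rw [pow_add]; ring
          rw [hterm]
          have him := Finset.mem_range.mp hi
          exact hmixp a (m - 1 + i) (p i) ha (hpd i him) (by omega)
    | zero => simpa using M.zero_mem
    | add v w _ _ ihv ihw => rw [mul_add]; exact M.add_mem ihv ihw
    | smul c v _ ih => rw [mul_smul_comm]; exact M.smul_mem c ih
  have h1 : (1 : B) ∈ M := by
    have := hgenx 0 0 (Nat.zero_le d) (by omega)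
    simpa using this
  exact isIntegral_of_one_mem_fg M (Submodule.fg_span F.finite_toSet) h1 u hstab

end Main

theorem stmt19 {A B : Type*} [CommRing A] [CommRing B] [Algebra A B] (x y : B) (m n : ℕ)
    (u : B)
    (hx : ∃ P : Polynomial (Algebra.adjoin A ({x} : Set B)), P.Monic ∧ P.natDegree = n ∧
      Polynomial.eval₂ (Algebra.adjoin A ({x} : Set B)).val.toRingHom u P = 0)
    (hy : ∃ P : Polynomial (Algebra.adjoin A ({y} : Set B)), P.Monic ∧ P.natDegree = m ∧
      Polynomial.eval₂ (Algebra.adjoin A ({y} : Set B)).val.toRingHom u P = 0) :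
    ∃ lam : ℕ, ∃ P : Polynomial (Algebra.adjoin A ({x * y} : Set B)),
      P.Monic ∧ P.natDegree = lam ∧
      Polynomial.eval₂ (Algebra.adjoin A ({x * y} : Set B)).val.toRingHom u P = 0 := by
  obtain ⟨Px, hPxm, _, hPxe⟩ := hx
  obtain ⟨Py, hPym, _, hPye⟩ := hy
  obtain ⟨P, hPm, hPe⟩ := isIntegral_adjoin_mul x y u ⟨Px, hPxm, hPxe⟩ ⟨Py, hPym, hPye⟩
  exact ⟨P.natDegree, P, hPm, rfl, hPe⟩
end
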